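/- arXiv:1912.03616 — 3 statements merged into one kernel-verified Lean document; each statement's English description precedes it below -/
import Mathlib

section
/- Let M ∈ ℝ^{m×n}, let G ∈ ℝ^{p×m} with GGᵀ invertible, and let H ∈ ℝ^{n×q} with HᵀH invertible. Define D = M − Gᵀ (GGᵀ)⁻¹ G M H (HᵀH)⁻¹ Hᵀ. Then for every D' ∈ ℝ^{m×n} satisfying G D' H = 0, one has ‖M − D‖_F ≤ ‖M − D'‖_F; that is, D minimizes the Frobenius distance ½‖M − D'‖_F² over the set { D' : G D' H = 0 }. -/
/-!
`P = Gᵀ(GGᵀ)⁻¹G` and `Q = H(HᵀH)⁻¹Hᵀ` are orthogonal projections, and `M - D = P M Q`.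
A feasible `D'` has `P D' Q = 0`, so `M - D = P (M - D') Q`. Multiplying by an orthogonal
projection on either side cannot increase the Frobenius norm, by Pythagoras:
`‖X‖² = ‖P X‖² + ‖(1 - P) X‖²`.
-/

open Matrix

attribute [local instance] Matrix.frobeniusNormedAddCommGroup

namespace Matrix

theorem isStarProjection_conjTranspose_mul_nonsing_inv_mul {R : Type*} [CommRing R] [StarRing R]
    {m p : Type*} [Fintype m] [Fintype p] [DecidableEq p] (G : Matrix p m R)
    (hG : IsUnit (G * Gᴴ)) : IsStarProjection (Gᴴ * (G * Gᴴ)⁻¹ * G) := by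
  have hGG : (G * Gᴴ)⁻¹ * (G * Gᴴ) = 1 := nonsing_inv_mul _ ((isUnit_iff_isUnit_det _).mp hG)
  refine ⟨?_, ?_⟩
  · calc Gᴴ * (G * Gᴴ)⁻¹ * G * (Gᴴ * (G * Gᴴ)⁻¹ * G)
        = Gᴴ * ((G * Gᴴ)⁻¹ * (G * Gᴴ)) * (G * Gᴴ)⁻¹ * G := by simp only [Matrix.mul_assoc]
      _ = Gᴴ * (G * Gᴴ)⁻¹ * G := by rw [hGG, Matrix.mul_one]
  · simp only [IsSelfAdjoint, star_eq_conjTranspose, conjTranspose_mul, conjTranspose_nonsing_inv,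
      conjTranspose_conjTranspose, Matrix.mul_assoc]

theorem frobenius_norm_sq_eq_re_trace {𝕜 : Type*} [RCLike 𝕜] {m n : Type*} [Fintype m]
    [Fintype n] (A : Matrix m n 𝕜) : ‖A‖ ^ 2 = RCLike.re (Aᴴ * A).trace := by
  rw [frobenius_norm_def, ← Real.rpow_natCast, ← Real.rpow_mul (by positivity), Nat.cast_ofNat,
    one_div_mul_cancel two_ne_zero, Real.rpow_one, trace, Finset.sum_comm]
  simp only [Real.rpow_two, diag_apply, mul_apply, conjTranspose_apply, RCLike.star_def,
    RCLike.conj_mul, map_sum]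
  norm_cast

end Matrix

namespace IsStarProjection

variable {𝕜 : Type*} [RCLike 𝕜] {m n : Type*} [Fintype m] [Fintype n]

theorem frobenius_norm_mul_sq {P : Matrix m m 𝕜} (hP : IsStarProjection P)
    (X : Matrix m n 𝕜) : ‖P * X‖ ^ 2 = RCLike.re (Xᴴ * P * X).trace := by
  have hPP : Pᴴ * P = P := by
    rw [← star_eq_conjTranspose, hP.isSelfAdjoint.star_eq, hP.isIdempotentElem.eq]
  rw [frobenius_norm_sq_eq_re_trace, conjTranspose_mul, Matrix.mul_assoc,
    ← Matrix.mul_assoc Pᴴ, hPP, Matrix.mul_assoc]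

theorem frobenius_norm_mul_sq_add_norm_one_sub_mul_sq [DecidableEq m] {P : Matrix m m 𝕜}
    (hP : IsStarProjection P) (X : Matrix m n 𝕜) :
    ‖P * X‖ ^ 2 + ‖(1 - P) * X‖ ^ 2 = ‖X‖ ^ 2 := by
  rw [hP.frobenius_norm_mul_sq, hP.one_sub.frobenius_norm_mul_sq, frobenius_norm_sq_eq_re_trace,
    ← map_add, ← trace_add, ← Matrix.add_mul, ← Matrix.mul_add, add_sub_cancel, Matrix.mul_one]

theorem frobenius_norm_mul_left_le {P : Matrix m m 𝕜} (hP : IsStarProjection P)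
    (X : Matrix m n 𝕜) : ‖P * X‖ ≤ ‖X‖ := by
  classical
  rw [← sq_le_sq₀ (norm_nonneg _) (norm_nonneg _),
    ← hP.frobenius_norm_mul_sq_add_norm_one_sub_mul_sq X]
  exact le_add_of_nonneg_right (sq_nonneg _)

theorem frobenius_norm_mul_right_le {Q : Matrix n n 𝕜} (hQ : IsStarProjection Q)
    (X : Matrix m n 𝕜) : ‖X * Q‖ ≤ ‖X‖ := by
  rw [← frobenius_norm_conjTranspose, conjTranspose_mul, ← star_eq_conjTranspose Q,
    hQ.isSelfAdjoint.star_eq, ← frobenius_norm_conjTranspose X]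
  exact hQ.frobenius_norm_mul_left_le Xᴴ

end IsStarProjection

/-- The projected gradient `D = M − Gᵀ(GGᵀ)⁻¹ G M H (HᵀH)⁻¹ Hᵀ` minimizes the
Frobenius distance to `M` over the set `{D' : G D' H = 0}`. -/
theorem projected_gradient_minimizes {m n p q : ℕ}
    (M : Matrix (Fin m) (Fin n) ℝ)
    (G : Matrix (Fin p) (Fin m) ℝ) (hG : IsUnit (G * Gᵀ))
    (H : Matrix (Fin n) (Fin q) ℝ) (hH : IsUnit (Hᵀ * H)) :
    ∀ D' : Matrix (Fin m) (Fin n) ℝ, G * D' * H = 0 →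
      ‖M - (M - Gᵀ * (G * Gᵀ)⁻¹ * G * M * H * (Hᵀ * H)⁻¹ * Hᵀ)‖ ≤ ‖M - D'‖ := by
  intro D' hD'
  have hP : IsStarProjection (Gᵀ * (G * Gᵀ)⁻¹ * G) := by
    simpa only [conjTranspose_eq_transpose_of_trivial] using
      isStarProjection_conjTranspose_mul_nonsing_inv_mul G
        (by rwa [conjTranspose_eq_transpose_of_trivial])
  have hQ : IsStarProjection (H * (Hᵀ * H)⁻¹ * Hᵀ) := by
    simpa only [conjTranspose_eq_transpose_of_trivial, transpose_transpose] using
      isStarProjection_conjTranspose_mul_nonsing_inv_mul Hᵀ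
        (by rwa [conjTranspose_eq_transpose_of_trivial, transpose_transpose])
  have hPD'Q : Gᵀ * (G * Gᵀ)⁻¹ * G * D' * (H * (Hᵀ * H)⁻¹ * Hᵀ) = 0 := by
    calc _ = Gᵀ * (G * Gᵀ)⁻¹ * (G * D' * H) * ((Hᵀ * H)⁻¹ * Hᵀ) := by simp only [Matrix.mul_assoc]
      _ = 0 := by rw [hD', Matrix.mul_zero, Matrix.zero_mul]
  have hMD : M - (M - Gᵀ * (G * Gᵀ)⁻¹ * G * M * H * (Hᵀ * H)⁻¹ * Hᵀ)
      = Gᵀ * (G * Gᵀ)⁻¹ * G * (M - D') * (H * (Hᵀ * H)⁻¹ * Hᵀ) := by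
    rw [Matrix.mul_sub, Matrix.sub_mul, hPD'Q, sub_zero, sub_sub_cancel]
    simp only [Matrix.mul_assoc]
  calc _ = ‖Gᵀ * (G * Gᵀ)⁻¹ * G * (M - D') * (H * (Hᵀ * H)⁻¹ * Hᵀ)‖ := by rw [hMD]
    _ ≤ ‖Gᵀ * (G * Gᵀ)⁻¹ * G * (M - D')‖ := hQ.frobenius_norm_mul_right_le _
    _ ≤ ‖M - D'‖ := hP.frobenius_norm_mul_left_le _
end

section
/- Let M ∈ ℝ^{m×n}, let G ∈ ℝ^{p×m} with GGᵀ invertible, and let H ∈ ℝ^{n×q} with HᵀH invertible. Define D = M − Gᵀ (GGᵀ)⁻¹ G M H (HᵀH)⁻¹ Hᵀ. Then D is the unique minimizer of ½‖M − D'‖_F² over { D' ∈ ℝ^{m×n} : G D' H = 0 }: for every D' with G D' H = 0 and D' ≠ D, one has ‖M − D‖_F < ‖M − D'‖_F. -/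
open Matrix

attribute [local instance] Matrix.frobeniusNormedAddCommGroup

/-! The correction `E = Gᵀ(GGᵀ)⁻¹ G M H (HᵀH)⁻¹ Hᵀ` satisfies `G E H = G M H`, so `D = M - E` is
feasible, and `E` has the form `Gᵀ C Hᵀ`, which is Frobenius-orthogonal (`tr(Eᵀ X) = tr(Cᵀ G X H)`)
to every `X` with `G X H = 0`. For a feasible `D'` the difference `X = D - D'` is such an `X`,
so Pythagoras gives `‖M - D'‖² = ‖E + X‖² = ‖E‖² + ‖X‖² > ‖E‖² = ‖M - D‖²` as soon as `D' ≠ D`. -/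

namespace Matrix

section Frobenius

variable {m n : Type*} [Fintype m] [Fintype n]

theorem frobenius_norm_sq_eq_trace (A : Matrix m n ℝ) : ‖A‖ ^ 2 = trace (Aᵀ * A) := by
  rw [frobenius_norm_def, ← Real.rpow_natCast, ← Real.rpow_mul (by positivity)]
  norm_num [trace, mul_apply, Finset.sum_comm (γ := m), sq]

theorem frobenius_norm_add_sq_of_trace_eq_zero {A B : Matrix m n ℝ} (h : trace (Aᵀ * B) = 0) :
    ‖A + B‖ ^ 2 = ‖A‖ ^ 2 + ‖B‖ ^ 2 := by
  have h' : trace (Bᵀ * A) = 0 := by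
    rw [← trace_transpose, transpose_mul, transpose_transpose, h]
  simp only [frobenius_norm_sq_eq_trace, transpose_add, Matrix.add_mul, Matrix.mul_add, trace_add,
    h, h']
  ring

theorem frobenius_norm_lt_norm_add_of_trace_eq_zero {A B : Matrix m n ℝ}
    (h : trace (Aᵀ * B) = 0) (hB : B ≠ 0) : ‖A‖ < ‖A + B‖ := by
  have hB' : 0 < ‖B‖ ^ 2 := by positivity
  rw [← pow_lt_pow_iff_left₀ (norm_nonneg A) (norm_nonneg _) two_ne_zero,
    frobenius_norm_add_sq_of_trace_eq_zero h]
  linarith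

end Frobenius

variable {R l m n k : Type*} [CommRing R] [Fintype l] [Fintype m] [Fintype n] [Fintype k]

theorem trace_transpose_mul_eq_zero_of_mul_mul_eq_zero (C : Matrix l k R) {G : Matrix l m R}
    {H : Matrix n k R} {X : Matrix m n R} (hX : G * X * H = 0) :
    trace ((Gᵀ * C * Hᵀ)ᵀ * X) = 0 := by
  calc trace ((Gᵀ * C * Hᵀ)ᵀ * X) = trace ((H * Cᵀ) * (G * X)) := by
        simp only [transpose_mul, transpose_transpose, Matrix.mul_assoc]
    _ = trace (G * X * H * Cᵀ) := by rw [trace_mul_comm]; simp only [Matrix.mul_assoc]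
    _ = 0 := by rw [hX, Matrix.zero_mul, trace_zero]

theorem mul_projection_mul_eq_mul_mul [DecidableEq l] [DecidableEq k] (M : Matrix m n R)
    {G : Matrix l m R} (hG : IsUnit (G * Gᵀ)) {H : Matrix n k R} (hH : IsUnit (Hᵀ * H)) :
    G * (Gᵀ * (G * Gᵀ)⁻¹ * G * M * H * (Hᵀ * H)⁻¹ * Hᵀ) * H = G * M * H := by
  calc G * (Gᵀ * (G * Gᵀ)⁻¹ * G * M * H * (Hᵀ * H)⁻¹ * Hᵀ) * H
      = G * Gᵀ * (G * Gᵀ)⁻¹ * (G * M * H) * ((Hᵀ * H)⁻¹ * (Hᵀ * H)) := by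
        simp only [Matrix.mul_assoc]
    _ = G * M * H := by
        rw [mul_nonsing_inv _ ((isUnit_iff_isUnit_det _).mp hG),
          nonsing_inv_mul _ ((isUnit_iff_isUnit_det _).mp hH), Matrix.one_mul, Matrix.mul_one]

end Matrix

/-- The projected gradient `D = M − Gᵀ(GGᵀ)⁻¹ G M H (HᵀH)⁻¹ Hᵀ` is the unique
minimizer of the Frobenius distance to `M` over the set `{D' : G D' H = 0}`:
any other feasible `D'` is strictly farther from `M`. -/
theorem projected_gradient_unique_minimizer {m n p q : ℕ}
    (M : Matrix (Fin m) (Fin n) ℝ)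
    (G : Matrix (Fin p) (Fin m) ℝ) (hG : IsUnit (G * Gᵀ))
    (H : Matrix (Fin n) (Fin q) ℝ) (hH : IsUnit (Hᵀ * H)) :
    ∀ D' : Matrix (Fin m) (Fin n) ℝ, G * D' * H = 0 →
      D' ≠ M - Gᵀ * (G * Gᵀ)⁻¹ * G * M * H * (Hᵀ * H)⁻¹ * Hᵀ →
      ‖M - (M - Gᵀ * (G * Gᵀ)⁻¹ * G * M * H * (Hᵀ * H)⁻¹ * Hᵀ)‖ < ‖M - D'‖ := by
  intro D' hD' hne
  set E := Gᵀ * (G * Gᵀ)⁻¹ * G * M * H * (Hᵀ * H)⁻¹ * Hᵀ with hE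
  have hE_feas : G * E * H = G * M * H := mul_projection_mul_eq_mul_mul M hG hH
  have hE_form : E = Gᵀ * ((G * Gᵀ)⁻¹ * G * M * H * (Hᵀ * H)⁻¹) * Hᵀ := by
    simp only [hE, Matrix.mul_assoc]
  set X := M - D' - E with hX_def
  have hX : G * X * H = 0 := by
    simp only [hX_def, Matrix.mul_sub, Matrix.sub_mul, hD', hE_feas, sub_zero, sub_self]
  have hX_ne : X ≠ 0 := sub_ne_zero.mpr fun h ↦ hne (by rw [← h]; abel)
  have horth : trace (Eᵀ * X) = 0 := by
    rw [hE_form]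
    exact trace_transpose_mul_eq_zero_of_mul_mul_eq_zero _ hX
  simpa only [X, sub_sub_cancel, add_sub_cancel] using
    frobenius_norm_lt_norm_add_of_trace_eq_zero horth hX_ne
end

section
/- Let M ∈ ℝ^{m×n}, let G ∈ ℝ^{p×m} with GGᵀ invertible, and let H ∈ ℝ^{n×q} with HᵀH invertible. Then M − Gᵀ (GGᵀ)⁻¹ G M H (HᵀH)⁻¹ Hᵀ = 0 if and only if there exists Λ₀ ∈ ℝ^{p×q} such that M = Gᵀ Λ₀ Hᵀ. (The projected gradient vanishes exactly when the gradient lies in the span of the constraint normals, i.e., the KKT stationarity condition of the constrained problem holds.) -/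
open Matrix

/-!
`P = Gᵀ(GGᵀ)⁻¹G` and `Q = H(HᵀH)⁻¹Hᵀ` are projections fixing `Gᵀ` from the left and `Hᵀ`
from the right, so `M = PMQ` exhibits `M` in the form `Gᵀ Λ₀ Hᵀ`, and conversely every
`Gᵀ Λ₀ Hᵀ` is fixed by `M ↦ PMQ`.
-/

namespace Matrix

variable {R : Type*} [CommRing R] {k l m n : Type*}
  [Fintype k] [DecidableEq k] [Fintype l] [DecidableEq l] [Fintype m] [Fintype n]

theorem mul_inv_mul_self_mul_eq_self {A : Matrix k m R} {B : Matrix m k R}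
    (hAB : IsUnit (A * B)) : B * (A * B)⁻¹ * A * B = B := by
  rw [Matrix.mul_assoc _ A B, nonsing_inv_mul_cancel_right _ _ ((isUnit_iff_isUnit_det _).mp hAB)]

theorem mul_self_mul_inv_mul_eq_self {D : Matrix l n R} {C : Matrix n l R}
    (hDC : IsUnit (D * C)) : D * C * (D * C)⁻¹ * D = D := by
  rw [mul_nonsing_inv _ ((isUnit_iff_isUnit_det _).mp hDC), Matrix.one_mul]

theorem eq_proj_mul_mul_proj_iff_exists_eq {M : Matrix m n R}
    {A : Matrix k m R} {B : Matrix m k R} (hAB : IsUnit (A * B))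
    {C : Matrix n l R} {D : Matrix l n R} (hDC : IsUnit (D * C)) :
    M = B * (A * B)⁻¹ * A * M * C * (D * C)⁻¹ * D ↔ ∃ Λ : Matrix k l R, M = B * Λ * D := by
  constructor
  · intro hM
    exact ⟨(A * B)⁻¹ * A * M * C * (D * C)⁻¹, hM.trans (by simp only [Matrix.mul_assoc])⟩
  · rintro ⟨Λ, rfl⟩
    calc B * Λ * D
        = (B * (A * B)⁻¹ * A * B) * Λ * (D * C * (D * C)⁻¹ * D) := by
          rw [mul_inv_mul_self_mul_eq_self hAB, mul_self_mul_inv_mul_eq_self hDC]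
      _ = B * (A * B)⁻¹ * A * (B * Λ * D) * C * (D * C)⁻¹ * D := by
          simp only [Matrix.mul_assoc]

end Matrix

/-- The projected gradient vanishes exactly when the gradient lies in the span of
the constraint normals: `M − Gᵀ(GGᵀ)⁻¹ G M H (HᵀH)⁻¹ Hᵀ = 0` iff `M = Gᵀ Λ₀ Hᵀ`
for some `Λ₀` (KKT stationarity). -/
theorem projected_gradient_zero_iff_kkt {m n p q : ℕ}
    (M : Matrix (Fin m) (Fin n) ℝ)
    (G : Matrix (Fin p) (Fin m) ℝ) (hG : IsUnit (G * Gᵀ))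
    (H : Matrix (Fin n) (Fin q) ℝ) (hH : IsUnit (Hᵀ * H)) :
    M - Gᵀ * (G * Gᵀ)⁻¹ * G * M * H * (Hᵀ * H)⁻¹ * Hᵀ = 0 ↔
      ∃ Λ₀ : Matrix (Fin p) (Fin q) ℝ, M = Gᵀ * Λ₀ * Hᵀ := by
  rw [sub_eq_zero]
  exact eq_proj_mul_mul_proj_iff_exists_eq hG hH
end
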